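/- Let E ∈ ℝ^{n×n} be symmetric, F ∈ ℝ^{m×n}, G ∈ ℝ^{m×m}, q ∈ ℝⁿ, r ∈ ℝᵐ, and let û ∈ ℝⁿ, p̂ ∈ ℝᵐ. Fix positive weights α₁, α₂, α₃, β₁, β₂. Set Q = q − Eû − Fᵀp̂, R = r − Fû − Gp̂, N₁ = J_S^n Φ_E D_{S,n}⁻¹. Define X₁^R = [α₁⁻¹(ûᵀ⊗Iₙ)N₁, α₂⁻¹(Iₙ⊗p̂ᵀ)Σ_F, 0_{n×m²}], X₂^R = [0_{m×n(n+1)/2}, α₂⁻¹(ûᵀ⊗I_m)Σ_F, α₃⁻¹(p̂ᵀ⊗I_m)Σ_G], Ĩ₁ = [−β₁⁻¹Iₙ, 0_{n×m}], Ĩ₂ = [0_{m×n}, −β₂⁻¹I_m], and M = [[X₁^R, Ĩ₁],[X₂^R, Ĩ₂]]. Then MMᵀ is invertible, and the sparsity-preserving structured backward error inf{ ζ^{σ₁}(ΔE⊙Θ_E, ΔF⊙Θ_F, ΔG⊙Θ_G, Δq, Δr) : ΔE ∈ ℝ^{n×n} symmetric, ΔF ∈ ℝ^{m×n}, ΔG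 ∈ ℝ^{m×m}, Δq ∈ ℝⁿ, Δr ∈ ℝᵐ, (E+ΔE⊙Θ_E)û + (F+ΔF⊙Θ_F)ᵀp̂ = q+Δq and (F+ΔF⊙Θ_F)û + (G+ΔG⊙Θ_G)p̂ = r+Δr } is attained and equals ‖Mᵀ(MMᵀ)⁻¹[Q; R]‖₂. -/

import Mathlib

/-
Encode a perturbation `(ΔE, ΔF, ΔG, Δq, Δr)` as the vector
`z = (α₁ D_{S,n} vec_S ΔE, α₂ vec ΔF, α₃ vec ΔG, β₁ Δq, β₂ Δr)`. For symmetric perturbations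
supported on the sparsity patterns, `‖z‖₂ = ζ^{σ₁}` and the perturbed equations say exactly
`M z = [Q; R]`, so the backward error is the least norm of a solution of `M z = [Q; R]`.
The last block column of `M` is an invertible diagonal matrix, so `M` has full row rank and
that least norm is attained at `z₀ = Mᵀ (M Mᵀ)⁻¹ [Q; R]`, by Pythagoras (`z₀ ⟂ ker M`).
Finally `z₀` is itself admissible: the columns of `M` at the zeros of `E`, `F`, `G` vanish,
hence so do the corresponding entries of `z₀ = Mᵀ y`.
-/

open Matrix

noncomputable section

namespace GSPPBE

/-- Entrywise real part of a complex matrix. -/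
def reM {I J : Type*} (A : Matrix I J ℂ) : Matrix I J ℝ := A.map Complex.re

/-- Entrywise imaginary part of a complex matrix. -/
def imM {I J : Type*} (A : Matrix I J ℂ) : Matrix I J ℝ := A.map Complex.im

/-- Entrywise real part of a complex vector. -/
def reV {I : Type*} (v : I → ℂ) : I → ℝ := fun i => (v i).re

/-- Entrywise imaginary part of a complex vector. -/
def imV {I : Type*} (v : I → ℂ) : I → ℝ := fun i => (v i).im

/-- Frobenius norm of a matrix. -/
def frob {I J α : Type*} [Fintype I] [Fintype J] [SeminormedAddGroup α]
    (A : Matrix I J α) : ℝ :=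
  Real.sqrt (∑ i, ∑ j, ‖A i j‖ ^ 2)

/-- Euclidean norm of a (finitely indexed) vector. -/
def eunorm {I α : Type*} [Fintype I] [SeminormedAddGroup α] (v : I → α) : ℝ :=
  Real.sqrt (∑ i, ‖v i‖ ^ 2)

/-- Column-major vectorization: `vecM A (j, i) = A i j`. -/
def vecM {I J α : Type*} (A : Matrix I J α) : J × I → α := fun p => A p.2 p.1

/-- Index type for the lower triangle including the diagonal (positions of `vec_S`);
it has `m(m+1)/2` elements. -/
abbrev SymIdx (m : ℕ) := {p : Fin m × Fin m // p.2 ≤ p.1}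

/-- Index type for the strictly lower triangle (positions of `vec_SK`);
it has `m(m-1)/2` elements. -/
abbrev SkewIdx (m : ℕ) := {p : Fin m × Fin m // p.2 < p.1}

/-- `vec_S` of a (symmetric) matrix: its lower-triangular entries `Z i j`, `j ≤ i`. -/
def vecS {m : ℕ} {α : Type*} (Z : Matrix (Fin m) (Fin m) α) : SymIdx m → α :=
  fun p => Z p.1.1 p.1.2

/-- `vec_SK` of a (skew-symmetric) matrix: its strictly lower-triangular entries `Z i j`, `j < i`. -/
def vecSK {m : ℕ} {α : Type*} (Z : Matrix (Fin m) (Fin m) α) : SkewIdx m → α :=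
  fun p => Z p.1.1 p.1.2

/-- `J_S^m`: its column at position `(i,j)`, `j ≤ i`, is `vec(eᵢeⱼᵀ + eⱼeᵢᵀ)` for `i > j` and
`vec(eⱼeⱼᵀ)` for `i = j`.  Rows are vec positions `(column, row)`. -/
def JS (m : ℕ) : Matrix (Fin m × Fin m) (SymIdx m) ℝ :=
  Matrix.of fun cr p =>
    (if cr.2 = p.1.1 ∧ cr.1 = p.1.2 then (1 : ℝ) else 0) +
    (if p.1.1 ≠ p.1.2 ∧ cr.2 = p.1.2 ∧ cr.1 = p.1.1 then 1 else 0)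

/-- `J_SK^m`: its column at position `(i,j)`, `j < i`, is `vec(eᵢeⱼᵀ − eⱼeᵢᵀ)`. -/
def JSK (m : ℕ) : Matrix (Fin m × Fin m) (SkewIdx m) ℝ :=
  Matrix.of fun cr p =>
    (if cr.2 = p.1.1 ∧ cr.1 = p.1.2 then (1 : ℝ) else 0) -
    (if cr.2 = p.1.2 ∧ cr.1 = p.1.1 then 1 else 0)

open Classical in
/-- Sign pattern `Θ_X` of a matrix, with values in the same ring. -/
def theta {I J α : Type*} [Zero α] [One α] (X : Matrix I J α) : Matrix I J α :=
  Matrix.of fun i j => if X i j = 0 then 0 else 1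

open Classical in
/-- Real-valued sign pattern `Θ_X` of a matrix. -/
def thetaR {I J α : Type*} [Zero α] (X : Matrix I J α) : Matrix I J ℝ :=
  Matrix.of fun i j => if X i j = 0 then 0 else 1

/-- `Φ_X = diag(vec_S(Θ_X))`. -/
def Phi {m : ℕ} {α : Type*} [Zero α] (X : Matrix (Fin m) (Fin m) α) :
    Matrix (SymIdx m) (SymIdx m) ℝ :=
  Matrix.diagonal (vecS (thetaR X))

/-- `Ψ_X`: diagonal matrix listing the strictly lower-triangular entries of `Θ_X`
in `vec_SK` ordering. -/
def Psi {m : ℕ} {α : Type*} [Zero α] (X : Matrix (Fin m) (Fin m) α) :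
    Matrix (SkewIdx m) (SkewIdx m) ℝ :=
  Matrix.diagonal (vecSK (thetaR X))

/-- `Σ_X = diag(vec(Θ_X))`. -/
def Sig {I J α : Type*} [DecidableEq I] [DecidableEq J] [Zero α]
    (X : Matrix I J α) : Matrix (J × I) (J × I) ℝ :=
  Matrix.diagonal (vecM (thetaR X))

/-- `D_{S,m}`: diagonal entry `1` at the positions of diagonal entries `(j,j)`, `√2` elsewhere. -/
def DS (m : ℕ) : Matrix (SymIdx m) (SymIdx m) ℝ :=
  Matrix.diagonal fun p => if p.1.1 = p.1.2 then 1 else Real.sqrt 2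

/-- `D_{SK,m} = √2·I`. -/
def DSK (m : ℕ) : Matrix (SkewIdx m) (SkewIdx m) ℝ :=
  Matrix.diagonal fun _ => Real.sqrt 2

/-- `uᵀ ⊗ I_b`, viewed as a matrix acting on column-major vectorizations of `b×a` matrices. -/
def rowKronId {a b : ℕ} (u : Fin a → ℝ) : Matrix (Fin b) (Fin a × Fin b) ℝ :=
  Matrix.of fun r p => u p.1 * (if r = p.2 then 1 else 0)

/-- `I_a ⊗ vᵀ`, viewed as a matrix acting on column-major vectorizations of `b×a` matrices. -/
def idKronRow {a b : ℕ} (v : Fin b → ℝ) : Matrix (Fin a) (Fin a × Fin b) ℝ :=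
  Matrix.of fun r p => (if r = p.1 then 1 else 0) * v p.2

/-- The weighted norm `ζ^{σ₁}(A,B,C,q,r)`. -/
def zeta1 {n m : ℕ} {α : Type*} [SeminormedAddGroup α]
    (α₁ α₂ α₃ β₁ β₂ : ℝ)
    (A : Matrix (Fin n) (Fin n) α) (B : Matrix (Fin m) (Fin n) α)
    (C : Matrix (Fin m) (Fin m) α) (q : Fin n → α) (r : Fin m → α) : ℝ :=
  Real.sqrt (α₁ ^ 2 * frob A ^ 2 + α₂ ^ 2 * frob B ^ 2 + α₃ ^ 2 * frob C ^ 2 +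
    β₁ ^ 2 * eunorm q ^ 2 + β₂ ^ 2 * eunorm r ^ 2)

/-- The weighted norm `ζ^{σ₂}(A,B,H,C,q,r)`. -/
def zeta2 {n m : ℕ} {α : Type*} [SeminormedAddGroup α]
    (α₁ α₂ α₃ α₄ β₁ β₂ : ℝ)
    (A : Matrix (Fin n) (Fin n) α) (B : Matrix (Fin m) (Fin n) α)
    (H : Matrix (Fin m) (Fin n) α) (C : Matrix (Fin m) (Fin m) α)
    (q : Fin n → α) (r : Fin m → α) : ℝ :=
  Real.sqrt (α₁ ^ 2 * frob A ^ 2 + α₂ ^ 2 * frob B ^ 2 + α₃ ^ 2 * frob H ^ 2 +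
    α₄ ^ 2 * frob C ^ 2 + β₁ ^ 2 * eunorm q ^ 2 + β₂ ^ 2 * eunorm r ^ 2)


section Norms

variable {ι : Type*} [Fintype ι]

lemma eunorm_sq (v : ι → ℝ) : eunorm v ^ 2 = ∑ i, v i ^ 2 := by
  simp only [eunorm, Real.norm_eq_abs, sq_abs]; exact Real.sq_sqrt (by positivity)

lemma eunorm_eq_sqrt_dotProduct (v : ι → ℝ) : eunorm v = √(v ⬝ᵥ v) := by
  simp only [eunorm, dotProduct, Real.norm_eq_abs, sq, abs_mul_abs_self]

lemma frob_sq {I J : Type*} [Fintype I] [Fintype J] (X : Matrix I J ℝ) :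
    frob X ^ 2 = ∑ i, ∑ j, X i j ^ 2 := by
  simp only [frob, Real.norm_eq_abs, sq_abs]; exact Real.sq_sqrt (by positivity)

lemma eunorm_vecM_sq {I J : Type*} [Fintype I] [Fintype J] (X : Matrix I J ℝ) :
    eunorm (vecM X) ^ 2 = frob X ^ 2 := by
  rw [eunorm_sq, frob_sq, Fintype.sum_prod_type, Finset.sum_comm]; rfl

end Norms

section LeastNorm

variable {κ ι : Type*} [Fintype κ] [Fintype ι] [DecidableEq κ]

lemma isUnit_mul_transpose_of_injective_vecMul {M : Matrix κ ι ℝ}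
    (hM : Function.Injective M.vecMul) : IsUnit (M * Mᵀ) := by
  simpa [conjTranspose_eq_transpose_of_trivial] using (PosDef.mul_conjTranspose_self M hM).isUnit

lemma isUnit_fromCols_mul_transpose {ι' : Type*} [Fintype ι'] (X : Matrix κ ι' ℝ)
    {D : Matrix κ κ ℝ} (hD : IsUnit D) : IsUnit (fromCols X D * (fromCols X D)ᵀ) := by
  refine isUnit_mul_transpose_of_injective_vecMul fun v w hvw => ?_
  simp only [vecMul_fromCols, Sum.elim_eq_iff] at hvw
  exact vecMul_injective_iff_isUnit.mpr hD hvw.2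

variable {M : Matrix κ ι ℝ} (hM : IsUnit (M * Mᵀ)) (w : κ → ℝ)
include hM

lemma mulVec_transpose_mul_inv_mulVec : M *ᵥ ((Mᵀ * (M * Mᵀ)⁻¹) *ᵥ w) = w := by
  rw [mulVec_mulVec, ← Matrix.mul_assoc, mul_nonsing_inv _ ((isUnit_iff_isUnit_det _).mp hM),
    one_mulVec]

lemma eunorm_transpose_mul_inv_mulVec_le {z : ι → ℝ} (hz : M *ᵥ z = w) :
    eunorm ((Mᵀ * (M * Mᵀ)⁻¹) *ᵥ w) ≤ eunorm z := by
  have hz₀ := mulVec_transpose_mul_inv_mulVec hM w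
  rw [← mulVec_mulVec] at hz₀ ⊢
  generalize (M * Mᵀ)⁻¹ *ᵥ w = y at hz₀ ⊢
  have horth : (Mᵀ *ᵥ y) ⬝ᵥ (z - Mᵀ *ᵥ y) = 0 := by
    rw [dotProduct_comm, dotProduct_mulVec, vecMul_transpose, mulVec_sub, hz, hz₀, sub_self,
      zero_dotProduct]
  set z₀ := Mᵀ *ᵥ y
  have hpyth : z ⬝ᵥ z = z₀ ⬝ᵥ z₀ + (z - z₀) ⬝ᵥ (z - z₀) := by
    nth_rewrite 1 2 [← add_sub_cancel z₀ z]
    rw [add_dotProduct, dotProduct_add, dotProduct_add, dotProduct_comm (z - z₀) z₀, horth]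
    ring
  rw [eunorm_eq_sqrt_dotProduct, eunorm_eq_sqrt_dotProduct, hpyth]
  exact Real.sqrt_le_sqrt (le_add_of_nonneg_right (dotProduct_self_star_nonneg _))

end LeastNorm

section SymmetricVectorization

variable {n : ℕ}

def dsWeight (p : SymIdx n) : ℝ := if p.1.1 = p.1.2 then 1 else √2

lemma DS_eq_diagonal : DS n = diagonal dsWeight := rfl

lemma dsWeight_ne_zero (p : SymIdx n) : dsWeight p ≠ 0 := by
  unfold dsWeight; split_ifs <;> positivity

lemma inv_DS : (DS n)⁻¹ = diagonal fun p => (dsWeight p)⁻¹ :=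
  inv_eq_left_inv (by simp [DS_eq_diagonal, dsWeight_ne_zero])

lemma dsWeight_sq (p : SymIdx n) : dsWeight p ^ 2 = if p.1.1 = p.1.2 then 1 else 2 := by
  unfold dsWeight; split_ifs <;> simp

def symIdxOf (i j : Fin n) : SymIdx n :=
  if h : j ≤ i then ⟨(i, j), h⟩ else ⟨(j, i), (not_le.mp h).le⟩

lemma symIdxOf_comm (i j : Fin n) : symIdxOf i j = symIdxOf j i := by
  unfold symIdxOf
  split_ifs with h₁ h₂ h₂
  · obtain rfl := le_antisymm h₂ h₁; rfl
  · rfl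
  · rfl
  · exact absurd (not_le.mp h₁).le h₂

lemma symIdxOf_val (p : SymIdx n) : symIdxOf p.1.1 p.1.2 = p := dif_pos p.2

lemma _root_.Matrix.IsSymm.vecS_symIdxOf {α : Type*} {A : Matrix (Fin n) (Fin n) α}
    (hA : A.IsSymm) (i j : Fin n) : vecS A (symIdxOf i j) = A i j := by
  unfold vecS symIdxOf; split_ifs
  · rfl
  · exact hA.apply i j

lemma JS_apply (c r : Fin n) (p : SymIdx n) :
    JS n (c, r) p = if p = symIdxOf r c then 1 else 0 := by
  obtain ⟨⟨i, j⟩, hp : j ≤ i⟩ := p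
  simp only [JS, symIdxOf, of_apply]
  split_ifs <;> simp_all [Subtype.ext_iff, Fin.ext_iff] <;> omega

lemma JS_mulVec_vecS {A : Matrix (Fin n) (Fin n) ℝ} (hA : A.IsSymm) :
    JS n *ᵥ vecS A = vecM A := by
  ext ⟨c, r⟩
  simp [mulVec, dotProduct, JS_apply, hA.vecS_symIdxOf, vecM]

lemma sum_symIdx_dsWeight_sq_mul {f : Fin n → Fin n → ℝ} (hf : ∀ i j, f i j = f j i) :
    ∑ p : SymIdx n, dsWeight p ^ 2 * f p.1.1 p.1.2 = ∑ i, ∑ j, f i j := by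
  set h : Fin n × Fin n → ℝ := fun x =>
    if x.2 ≤ x.1 then (if x.1 = x.2 then 1 else 2) * f x.1 x.2 else 0
  have hsub : ∑ p : SymIdx n, dsWeight p ^ 2 * f p.1.1 p.1.2 = ∑ x, h x := by
    simp only [dsWeight_sq]
    rw [← Finset.sum_subtype (p := fun x : Fin n × Fin n => x.2 ≤ x.1) _
      (fun _ => Finset.mem_filter_univ _) fun x => (if x.1 = x.2 then 1 else 2) * f x.1 x.2,
      Finset.sum_filter]
  -- `h` and `h ∘ swap` have the same sum, and together they count every ordered pair twice
  have hswap : ∑ x, h x = ∑ x : Fin n × Fin n, h x.swap :=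
    (Fintype.sum_equiv (Equiv.prodComm _ _) _ _ fun _ => rfl).symm
  have hpair : ∀ x : Fin n × Fin n, h x + h x.swap = 2 * f x.1 x.2 := by
    rintro ⟨i, j⟩
    rcases lt_trichotomy i j with hij | rfl | hij
    · simp [h, hij.not_ge, hij.le, hij.ne', hf j i]
    · simp [h]; ring
    · simp [h, hij.not_ge, hij.le, hij.ne']
  have htotal := Finset.sum_add_distrib (s := Finset.univ) (f := h) (g := fun x => h x.swap)
  simp only [hpair, ← Finset.mul_sum, ← hswap] at htotal
  rw [hsub, ← Fintype.sum_prod_type']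
  linarith

end SymmetricVectorization

section KroneckerVectorization

variable {a b : ℕ}

lemma rowKronId_mulVec_vecM (u : Fin a → ℝ) (A : Matrix (Fin b) (Fin a) ℝ) :
    rowKronId u *ᵥ vecM A = A *ᵥ u := by
  ext i
  simp [mulVec, dotProduct, rowKronId, vecM, Fintype.sum_prod_type, mul_comm]

lemma idKronRow_mulVec_vecM (v : Fin b → ℝ) (B : Matrix (Fin b) (Fin a) ℝ) :
    idKronRow v *ᵥ vecM B = Bᵀ *ᵥ v := by
  ext i
  simp [mulVec, dotProduct, idKronRow, vecM, Fintype.sum_prod_type, mul_comm]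

end KroneckerVectorization

section SparsityPattern

variable {I J : Type*}

lemma hadamard_theta_of_eq_zero {A X : Matrix I J ℝ} (h : ∀ i j, X i j = 0 → A i j = 0) :
    A ⊙ theta X = A := by
  ext i j
  by_cases hX : X i j = 0 <;> simp [theta, hX, h]

lemma hadamard_theta_hadamard_theta (A X : Matrix I J ℝ) :
    A ⊙ theta X ⊙ theta X = A ⊙ theta X :=
  hadamard_theta_of_eq_zero fun i j hX => by simp [theta, hX]

lemma _root_.Matrix.IsSymm.hadamard_theta {n : ℕ} {A X : Matrix (Fin n) (Fin n) ℝ}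
    (hA : A.IsSymm) (hX : X.IsSymm) : (A ⊙ theta X).IsSymm := by
  ext i j
  simp [theta, hA.apply i j, hX.apply i j]

lemma Phi_mulVec_vecS {n : ℕ} (X A : Matrix (Fin n) (Fin n) ℝ) :
    Phi X *ᵥ vecS A = vecS (A ⊙ theta X) := by
  ext p
  simp [Phi, mulVec_diagonal, vecS, thetaR, theta, mul_comm]

lemma Sig_mulVec_vecM [Fintype I] [Fintype J] [DecidableEq I] [DecidableEq J]
    (X B : Matrix I J ℝ) : Sig X *ᵥ vecM B = vecM (B ⊙ theta X) := by
  ext p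
  simp [Sig, mulVec_diagonal, vecM, thetaR, theta, mul_comm]

end SparsityPattern

section StructuredPerturbation

variable {n m : ℕ}

abbrev PertIdx (n m : ℕ) := SymIdx n ⊕ ((Fin n × Fin m) ⊕ (Fin m × Fin m))

/-- Coordinates in which `ζ^{σ₁}` is the Euclidean norm: `D_{S,n}` weights each stored
off-diagonal entry of the symmetric `A` by `√2`, accounting for its mirror image. -/
def encode (α₁ α₂ α₃ β₁ β₂ : ℝ) (A : Matrix (Fin n) (Fin n) ℝ) (B : Matrix (Fin m) (Fin n) ℝ)
    (C : Matrix (Fin m) (Fin m) ℝ) (dq : Fin n → ℝ) (dr : Fin m → ℝ) :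
    PertIdx n m ⊕ (Fin n ⊕ Fin m) → ℝ :=
  Sum.elim (Sum.elim (α₁ • (DS n *ᵥ vecS A)) (Sum.elim (α₂ • vecM B) (α₃ • vecM C)))
    (Sum.elim (β₁ • dq) (β₂ • dr))

/-- The matrix `M` of the statement. The type ascriptions make `*` elaborate as `Matrix`
multiplication rather than through the definitionally equal `CStarMatrix` instance. -/
def structuredBEMatrix (E : Matrix (Fin n) (Fin n) ℝ) (F : Matrix (Fin m) (Fin n) ℝ)
    (G : Matrix (Fin m) (Fin m) ℝ) (uh : Fin n → ℝ) (ph : Fin m → ℝ) (α₁ α₂ α₃ β₁ β₂ : ℝ) :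
    Matrix (Fin n ⊕ Fin m) (PertIdx n m ⊕ (Fin n ⊕ Fin m)) ℝ :=
  fromBlocks
    (fromCols (α₁⁻¹ • ((rowKronId uh : Matrix (Fin n) _ ℝ) * (JS n * Phi E * (DS n)⁻¹)))
      (fromCols (α₂⁻¹ • ((idKronRow ph : Matrix (Fin n) _ ℝ) * Sig F)) 0))
    (fromCols ((-(β₁⁻¹)) • (1 : Matrix (Fin n) (Fin n) ℝ)) 0)
    (fromCols 0
      (fromCols (α₂⁻¹ • ((rowKronId uh : Matrix (Fin m) _ ℝ) * Sig F))
        (α₃⁻¹ • ((rowKronId ph : Matrix (Fin m) _ ℝ) * Sig G))))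
    (fromCols 0 ((-(β₂⁻¹)) • (1 : Matrix (Fin m) (Fin m) ℝ)))

variable (E : Matrix (Fin n) (Fin n) ℝ) (F : Matrix (Fin m) (Fin n) ℝ)
  (G : Matrix (Fin m) (Fin m) ℝ) (uh : Fin n → ℝ) (ph : Fin m → ℝ) {α₁ α₂ α₃ β₁ β₂ : ℝ}

lemma isUnit_structuredBEMatrix_mul_transpose (hβ₁ : β₁ ≠ 0) (hβ₂ : β₂ ≠ 0) :
    IsUnit (structuredBEMatrix E F G uh ph α₁ α₂ α₃ β₁ β₂ *
      (structuredBEMatrix E F G uh ph α₁ α₂ α₃ β₁ β₂)ᵀ) := by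
  rw [structuredBEMatrix, ← fromCols_fromRows_eq_fromBlocks]
  refine isUnit_fromCols_mul_transpose _ ?_
  rw [fromRows_fromCols_eq_fromBlocks, smul_one_eq_diagonal, smul_one_eq_diagonal,
    fromBlocks_diagonal, isUnit_diagonal, Pi.isUnit_iff]
  rintro (i | i) <;> simp [hβ₁, hβ₂]

lemma structuredBEMatrix_mulVec_encode (hα₁ : α₁ ≠ 0) (hα₂ : α₂ ≠ 0) (hα₃ : α₃ ≠ 0)
    (hβ₁ : β₁ ≠ 0) (hβ₂ : β₂ ≠ 0) {A : Matrix (Fin n) (Fin n) ℝ} {B : Matrix (Fin m) (Fin n) ℝ}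
    {C : Matrix (Fin m) (Fin m) ℝ} (dq : Fin n → ℝ) (dr : Fin m → ℝ) (hA : A.IsSymm)
    (hAE : A ⊙ theta E = A) (hBF : B ⊙ theta F = B) (hCG : C ⊙ theta G = C) :
    structuredBEMatrix E F G uh ph α₁ α₂ α₃ β₁ β₂ *ᵥ encode α₁ α₂ α₃ β₁ β₂ A B C dq dr =
      Sum.elim (A *ᵥ uh + Bᵀ *ᵥ ph - dq) (B *ᵥ uh + C *ᵥ ph - dr) := by
  have hDS (v : SymIdx n → ℝ) : (DS n)⁻¹ *ᵥ (DS n *ᵥ v) = v := by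
    ext p
    rw [inv_DS, DS_eq_diagonal, mulVec_diagonal, mulVec_diagonal,
      inv_mul_cancel_left₀ (dsWeight_ne_zero p)]
  simp only [structuredBEMatrix, encode, fromBlocks_mulVec, Sum.elim_comp_inl, Sum.elim_comp_inr,
    fromCols_mulVec_sumElim, smul_mulVec, mulVec_smul, smul_smul, ← mulVec_mulVec, hDS,
    Phi_mulVec_vecS, Sig_mulVec_vecM, hAE, hBF, hCG, JS_mulVec_vecS hA, rowKronId_mulVec_vecM,
    idKronRow_mulVec_vecM, neg_mulVec, one_mulVec, smul_neg, mul_inv_cancel₀, hα₁, hα₂, hα₃, hβ₁,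
    hβ₂, ne_eq, not_false_eq_true, one_smul, neg_smul, zero_mulVec, smul_zero, add_zero, zero_add,
    sub_eq_add_neg]

lemma eunorm_DS_mulVec_vecS_sq {A : Matrix (Fin n) (Fin n) ℝ} (hA : A.IsSymm) :
    eunorm (DS n *ᵥ vecS A) ^ 2 = frob A ^ 2 := by
  simp only [eunorm_sq, frob_sq, DS_eq_diagonal, mulVec_diagonal, vecS, mul_pow]
  exact sum_symIdx_dsWeight_sq_mul (f := fun i j => A i j ^ 2) fun i j => by rw [hA.apply]

lemma eunorm_encode (α₁ α₂ α₃ β₁ β₂ : ℝ) {A : Matrix (Fin n) (Fin n) ℝ} (hA : A.IsSymm)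
    (B : Matrix (Fin m) (Fin n) ℝ) (C : Matrix (Fin m) (Fin m) ℝ) (dq : Fin n → ℝ)
    (dr : Fin m → ℝ) :
    eunorm (encode α₁ α₂ α₃ β₁ β₂ A B C dq dr) = zeta1 α₁ α₂ α₃ β₁ β₂ A B C dq dr := by
  rw [eunorm, zeta1, ← eunorm_DS_mulVec_vecS_sq hA, ← eunorm_vecM_sq, ← eunorm_vecM_sq]
  congr 1
  simp only [eunorm_sq, Real.norm_eq_abs, sq_abs, encode, Fintype.sum_sum_type, Sum.elim_inl,
    Sum.elim_inr, Pi.smul_apply, smul_eq_mul, mul_pow, Finset.mul_sum]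
  ring

lemma structuredBEMatrix_mulVec_encode_eq_iff (hα₁ : α₁ ≠ 0) (hα₂ : α₂ ≠ 0) (hα₃ : α₃ ≠ 0)
    (hβ₁ : β₁ ≠ 0) (hβ₂ : β₂ ≠ 0) {A : Matrix (Fin n) (Fin n) ℝ} {B : Matrix (Fin m) (Fin n) ℝ}
    {C : Matrix (Fin m) (Fin m) ℝ} (dq : Fin n → ℝ) (dr : Fin m → ℝ) (hA : A.IsSymm)
    (hAE : A ⊙ theta E = A) (hBF : B ⊙ theta F = B) (hCG : C ⊙ theta G = C)
    (q : Fin n → ℝ) (r : Fin m → ℝ) :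
    structuredBEMatrix E F G uh ph α₁ α₂ α₃ β₁ β₂ *ᵥ encode α₁ α₂ α₃ β₁ β₂ A B C dq dr =
        Sum.elim (q - E *ᵥ uh - Fᵀ *ᵥ ph) (r - F *ᵥ uh - G *ᵥ ph) ↔
      (E + A) *ᵥ uh + (F + B)ᵀ *ᵥ ph = q + dq ∧ (F + B) *ᵥ uh + (G + C) *ᵥ ph = r + dr := by
  rw [structuredBEMatrix_mulVec_encode E F G uh ph hα₁ hα₂ hα₃ hβ₁ hβ₂ dq dr hA hAE hBF hCG,
    Sum.elim_eq_iff, transpose_add, add_mulVec, add_mulVec, add_mulVec, add_mulVec]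
  constructor <;> rintro ⟨h₁, h₂⟩ <;>
    exact ⟨by linear_combination (norm := module) h₁, by linear_combination (norm := module) h₂⟩

lemma exists_encode_eq_transpose_structuredBEMatrix_mulVec (hE : E.IsSymm) (hα₁ : α₁ ≠ 0)
    (hα₂ : α₂ ≠ 0) (hα₃ : α₃ ≠ 0) (hβ₁ : β₁ ≠ 0) (hβ₂ : β₂ ≠ 0) (y : Fin n ⊕ Fin m → ℝ) :
    ∃ (A : Matrix (Fin n) (Fin n) ℝ) (B : Matrix (Fin m) (Fin n) ℝ) (C : Matrix (Fin m) (Fin m) ℝ)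
      (dq : Fin n → ℝ) (dr : Fin m → ℝ), A.IsSymm ∧ A ⊙ theta E = A ∧ B ⊙ theta F = B ∧
      C ⊙ theta G = C ∧ encode α₁ α₂ α₃ β₁ β₂ A B C dq dr =
        (structuredBEMatrix E F G uh ph α₁ α₂ α₃ β₁ β₂)ᵀ *ᵥ y := by
  set z := (structuredBEMatrix E F G uh ph α₁ α₂ α₃ β₁ β₂)ᵀ *ᵥ y
  have hcol (c : PertIdx n m ⊕ (Fin n ⊕ Fin m))
      (h : ∀ k, structuredBEMatrix E F G uh ph α₁ α₂ α₃ β₁ β₂ k c = 0) : z c = 0 := by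
    simp [z, mulVec, dotProduct, h]
  have hzE (i j : Fin n) (h : E i j = 0) : z (.inl (.inl (symIdxOf i j))) = 0 := by
    have h' : E (symIdxOf i j).1.1 (symIdxOf i j).1.2 = 0 := (hE.vecS_symIdxOf i j).trans h
    refine hcol _ fun k => ?_
    rcases k with k | k <;>
      simp [structuredBEMatrix, Phi, inv_DS, ← Matrix.mul_assoc, mul_diagonal, vecS, thetaR, h']
  have hzF (i : Fin m) (j : Fin n) (h : F i j = 0) : z (.inl (.inr (.inl (j, i)))) = 0 := by
    refine hcol _ fun k => ?_
    rcases k with k | k <;> simp [structuredBEMatrix, Sig, vecM, thetaR, h]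
  have hzG (i j : Fin m) (h : G i j = 0) : z (.inl (.inr (.inr (j, i)))) = 0 := by
    refine hcol _ fun k => ?_
    rcases k with k | k <;> simp [structuredBEMatrix, Sig, vecM, thetaR, h]
  refine ⟨of fun i j => α₁⁻¹ * (dsWeight (symIdxOf i j))⁻¹ * z (.inl (.inl (symIdxOf i j))),
    of fun i j => α₂⁻¹ * z (.inl (.inr (.inl (j, i)))),
    of fun i j => α₃⁻¹ * z (.inl (.inr (.inr (j, i)))),
    fun i => β₁⁻¹ * z (.inr (.inl i)), fun i => β₂⁻¹ * z (.inr (.inr i)), ?_, ?_, ?_, ?_, ?_⟩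
  · ext i j
    simp [symIdxOf_comm i j]
  · exact hadamard_theta_of_eq_zero fun i j h => by simp [hzE i j h]
  · exact hadamard_theta_of_eq_zero fun i j h => by simp [hzF i j h]
  · exact hadamard_theta_of_eq_zero fun i j h => by simp [hzG i j h]
  · ext ((p | pq | pq) | i | i) <;>
      simp [encode, DS_eq_diagonal, mulVec_diagonal, vecS, vecM, symIdxOf_val,
        hα₂, hα₃, hβ₁, hβ₂]
    field_simp [dsWeight_ne_zero p]

end StructuredPerturbation

/-- Corollary 3.5: sparsity-preserving structured backward error for the real
GSPP with `E` symmetric, general `F`, `G`, and `H = F`. -/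
theorem structured_BE_real_case_a
    (n m : ℕ) (E : Matrix (Fin n) (Fin n) ℝ) (hE : E.IsSymm)
    (F : Matrix (Fin m) (Fin n) ℝ) (G : Matrix (Fin m) (Fin m) ℝ)
    (q : Fin n → ℝ) (r : Fin m → ℝ) (uh : Fin n → ℝ) (ph : Fin m → ℝ)
    (α₁ α₂ α₃ β₁ β₂ : ℝ)
    (hα₁ : 0 < α₁) (hα₂ : 0 < α₂) (hα₃ : 0 < α₃) (hβ₁ : 0 < β₁) (hβ₂ : 0 < β₂) :
    let Q : Fin n → ℝ := q - E *ᵥ uh - Fᵀ *ᵥ ph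
    let R : Fin m → ℝ := r - F *ᵥ uh - G *ᵥ ph
    let N₁ := JS n * Phi E * (DS n)⁻¹
    let X₁ : Matrix (Fin n) (SymIdx n ⊕ ((Fin n × Fin m) ⊕ (Fin m × Fin m))) ℝ :=
      fromCols (α₁⁻¹ • (rowKronId uh * N₁))
        (fromCols (α₂⁻¹ • (idKronRow ph * Sig F)) 0)
    let X₂ : Matrix (Fin m) (SymIdx n ⊕ ((Fin n × Fin m) ⊕ (Fin m × Fin m))) ℝ :=
      fromCols 0
        (fromCols (α₂⁻¹ • (rowKronId uh * Sig F)) (α₃⁻¹ • (rowKronId ph * Sig G)))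
    let I₁ : Matrix (Fin n) (Fin n ⊕ Fin m) ℝ :=
      fromCols ((-(β₁⁻¹)) • (1 : Matrix (Fin n) (Fin n) ℝ)) 0
    let I₂ : Matrix (Fin m) (Fin n ⊕ Fin m) ℝ :=
      fromCols 0 ((-(β₂⁻¹)) • (1 : Matrix (Fin m) (Fin m) ℝ))
    let M := fromBlocks X₁ I₁ X₂ I₂
    let w : Fin n ⊕ Fin m → ℝ := Sum.elim Q R
    IsUnit (M * Mᵀ) ∧
      IsLeast
        {t : ℝ | ∃ (ΔE : Matrix (Fin n) (Fin n) ℝ) (ΔF : Matrix (Fin m) (Fin n) ℝ)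
            (ΔG : Matrix (Fin m) (Fin m) ℝ) (Δq : Fin n → ℝ) (Δr : Fin m → ℝ),
            ΔE.IsSymm ∧
            (E + ΔE.hadamard (theta E)) *ᵥ uh + (F + ΔF.hadamard (theta F))ᵀ *ᵥ ph = q + Δq ∧
            (F + ΔF.hadamard (theta F)) *ᵥ uh + (G + ΔG.hadamard (theta G)) *ᵥ ph = r + Δr ∧
            t = zeta1 α₁ α₂ α₃ β₁ β₂ (ΔE.hadamard (theta E)) (ΔF.hadamard (theta F))
                  (ΔG.hadamard (theta G)) Δq Δr}
        (eunorm ((Mᵀ * (M * Mᵀ)⁻¹) *ᵥ w)) := by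
  intro Q R N₁ X₁ X₂ I₁ I₂ M w
  have hM : M = structuredBEMatrix E F G uh ph α₁ α₂ α₃ β₁ β₂ := rfl
  have hU : IsUnit (M * Mᵀ) :=
    hM ▸ isUnit_structuredBEMatrix_mul_transpose E F G uh ph hβ₁.ne' hβ₂.ne'
  refine ⟨hU, ?_, ?_⟩
  · obtain ⟨A, B, C, dq, dr, hA, hAE, hBF, hCG, henc⟩ :=
      exists_encode_eq_transpose_structuredBEMatrix_mulVec E F G uh ph hE hα₁.ne' hα₂.ne' hα₃.ne'
        hβ₁.ne' hβ₂.ne' ((M * Mᵀ)⁻¹ *ᵥ w)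
    rw [← hM, mulVec_mulVec] at henc
    refine ⟨A, B, C, dq, dr, hA, ?_⟩
    rw [hAE, hBF, hCG, ← and_assoc, ← structuredBEMatrix_mulVec_encode_eq_iff E F G uh ph hα₁.ne'
      hα₂.ne' hα₃.ne' hβ₁.ne' hβ₂.ne' dq dr hA hAE hBF hCG, ← eunorm_encode α₁ α₂ α₃ β₁ β₂ hA,
      ← hM, henc, mulVec_transpose_mul_inv_mulVec hU]
    exact ⟨rfl, rfl⟩
  · rintro t ⟨ΔE, ΔF, ΔG, Δq, Δr, hΔE, h₁, h₂, rfl⟩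
    have hA := hΔE.hadamard_theta hE
    rw [← eunorm_encode α₁ α₂ α₃ β₁ β₂ hA]
    refine eunorm_transpose_mul_inv_mulVec_le hU w ?_
    rw [hM, structuredBEMatrix_mulVec_encode_eq_iff E F G uh ph hα₁.ne' hα₂.ne' hα₃.ne' hβ₁.ne'
      hβ₂.ne' Δq Δr hA (hadamard_theta_hadamard_theta _ _) (hadamard_theta_hadamard_theta _ _)
      (hadamard_theta_hadamard_theta _ _)]
    exact ⟨h₁, h₂⟩

end GSPPBE
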